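/- arXiv:1606.08657 — 3 statements merged into one kernel-verified Lean document; each statement's English description precedes it below -/
import Mathlib

section
/- Every relation with the crossover property is an alignment defined by a partition: if N₁ and N₂ are disjoint finite sets with N = N₁ ∪ N₂, and A ⊆ N₁ × N₂ has the crossover property, then there exists a set of colors C and a function λ : N → C such that A = {(n,m) ∈ N₁ × N₂ | λ(n) = λ(m)}. -/
/-!
View `A` as a bipartite graph on `V` and colour each node by its connected component. The
crossover property says that two left nodes sharing a neighbour have the same neighbours, so
everything reachable from a left node `n` is `n` itself, a neighbour of `n`, or a left node
sharing a neighbour with `n`; a reachable right node is therefore a neighbour of `n`.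
-/

open SimpleGraph

section Crossover

variable {V : Type} {N₁ N₂ : Set V} {A : Set (V × V)}

abbrev relGraph (A : Set (V × V)) : SimpleGraph V :=
  SimpleGraph.fromRel fun a b => (a, b) ∈ A

theorem relGraph_reachable_of_mem (hdisj : Disjoint N₁ N₂)
    (hsub : A ⊆ {p | p.1 ∈ N₁ ∧ p.2 ∈ N₂}) {a b : V} (h : (a, b) ∈ A) :
    (relGraph A).Reachable a b :=
  Adj.reachable <| (fromRel_adj _ a b).2
    ⟨hdisj.ne_of_mem (hsub h).1 (hsub h).2, Or.inl h⟩

theorem relGraph_reachable_left_cases (hdisj : Disjoint N₁ N₂)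
    (hsub : A ⊆ {p | p.1 ∈ N₁ ∧ p.2 ∈ N₂})
    (hcross : ∀ n n' m m', (n, m) ∈ A → (n, m') ∈ A → (n', m) ∈ A → (n', m') ∈ A)
    {n w : V} (hn : n ∈ N₁) (hreach : (relGraph A).Reachable n w) :
    w = n ∨ (n, w) ∈ A ∨ ∃ m, (n, m) ∈ A ∧ (w, m) ∈ A := by
  have no_edge_into_left : ∀ {v x}, v ∈ N₁ → (x, v) ∉ A := fun hv hx =>
    hdisj.ne_of_mem hv (hsub hx).2 rfl
  have no_edge_out_of_right : ∀ {v x}, v ∈ N₂ → (v, x) ∉ A := fun hv hx =>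
    hdisj.ne_of_mem (hsub hx).1 hv rfl
  rw [reachable_iff_reflTransGen] at hreach
  induction hreach with
  | refl => exact Or.inl rfl
  | @tail w x _ hadj ih =>
    obtain ⟨-, hwx | hxw⟩ := (fromRel_adj _ w x).1 hadj
    · rcases ih with rfl | hnw | ⟨m, hnm, hwm⟩
      · exact Or.inr (Or.inl hwx)
      · exact absurd hwx (no_edge_out_of_right (hsub hnw).2)
      · exact Or.inr (Or.inl (hcross w n m x hwm hwx hnm))
    · rcases ih with rfl | hnw | ⟨m, hnm, hwm⟩
      · exact absurd hxw (no_edge_into_left hn)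
      · exact Or.inr (Or.inr ⟨w, hnw, hxw⟩)
      · exact absurd hxw (no_edge_into_left (hsub hwm).1)

theorem mem_of_relGraph_reachable (hdisj : Disjoint N₁ N₂)
    (hsub : A ⊆ {p | p.1 ∈ N₁ ∧ p.2 ∈ N₂})
    (hcross : ∀ n n' m m', (n, m) ∈ A → (n, m') ∈ A → (n', m) ∈ A → (n', m') ∈ A)
    {n m : V} (hn : n ∈ N₁) (hm : m ∈ N₂) (hreach : (relGraph A).Reachable n m) :
    (n, m) ∈ A := by
  rcases relGraph_reachable_left_cases hdisj hsub hcross hn hreach with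
    rfl | hnm | ⟨_, _, hmm'⟩
  · exact absurd rfl (hdisj.ne_of_mem hn hm)
  · exact hnm
  · exact absurd (hsub hmm').1 (Set.disjoint_right.1 hdisj hm)

end Crossover

theorem crossover_is_align_of_partition_general {V : Type} (N₁ N₂ : Set V)
    (hdisj : Disjoint N₁ N₂)
    (A : Set (V × V)) (hsub : A ⊆ {p | p.1 ∈ N₁ ∧ p.2 ∈ N₂})
    (hcross : ∀ n n' m m', (n, m) ∈ A → (n, m') ∈ A → (n', m) ∈ A →
      (n', m') ∈ A) :
    ∃ (C : Type) (lam : V → C),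
      A = {p | p.1 ∈ N₁ ∧ p.2 ∈ N₂ ∧ lam p.1 = lam p.2} := by
  refine ⟨(relGraph A).ConnectedComponent, (relGraph A).connectedComponentMk, ?_⟩
  ext ⟨n, m⟩
  simp only [Set.mem_ofPred_eq, ConnectedComponent.eq]
  constructor
  · intro h
    exact ⟨(hsub h).1, (hsub h).2, relGraph_reachable_of_mem hdisj hsub h⟩
  · rintro ⟨hn, hm, hreach⟩
    exact mem_of_relGraph_reachable hdisj hsub hcross hn hm hreach

/-- Every relation between two disjoint finite node sets having the crossover
property is the alignment defined by some partition (coloring). -/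
theorem crossover_is_align_of_partition {V : Type} (N₁ N₂ : Set V)
    (hfin₁ : N₁.Finite) (hfin₂ : N₂.Finite) (hdisj : Disjoint N₁ N₂)
    (A : Set (V × V)) (hsub : A ⊆ {p | p.1 ∈ N₁ ∧ p.2 ∈ N₂})
    (hcross : ∀ n n' m m', (n, m) ∈ A → (n, m') ∈ A → (n', m) ∈ A →
      (n', m') ∈ A) :
    ∃ (C : Type) (lam : V → C),
      A = {p | p.1 ∈ N₁ ∧ p.2 ∈ N₂ ∧ lam p.1 = lam p.2} :=
  crossover_is_align_of_partition_general N₁ N₂ hdisj A hsub hcross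
end

section
/- Bisimulation partition refinement captures maximal bisimulation: for a finite triple graph G = (N, E, ℓ), the intersection ⋂_k R_k of the bisimulation partition refinement sequence equals the maximal bisimulation on G, i.e., the union of all bisimulations on G. -/
/-! Each stage of the refinement sequence refines the previous one, so on a finite graph the
sequence, an antitone chain in a finite lattice of relations, becomes constant. A stage `R_n`
with `R_{n+1} = R_n` is a bisimulation, since the defining clauses of `R_{n+1}` are then the
simulation conditions for `R_n` and its inverse. Conversely every bisimulation is contained in
every stage. -/

/-- The outbound neighborhood of a node `n` in a triple graph with edge set `E`:
the pairs `(p, o)` such that `(n, p, o)` is an edge. -/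
def outNbr {V : Type*} (E : Set (V × V × V)) (n : V) : Set (V × V) :=
  {po | (n, po.1, po.2) ∈ E}

/-- `R` is a simulation on the triple graph with edges `E` and labeling `ℓ`. -/
def IsSimulation {V I : Type*} (E : Set (V × V × V)) (ℓ : V → I)
    (R : Set (V × V)) : Prop :=
  ∀ n m, (n, m) ∈ R → ℓ n = ℓ m ∧
    ∀ p o, (p, o) ∈ outNbr E n →
      ∃ p' o', (p', o') ∈ outNbr E m ∧ (p, p') ∈ R ∧ (o, o') ∈ R

/-- `R` is a bisimulation if both `R` and its inverse are simulations. -/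
def IsBisimulation {V I : Type*} (E : Set (V × V × V)) (ℓ : V → I)
    (R : Set (V × V)) : Prop :=
  IsSimulation E ℓ R ∧ IsSimulation E ℓ {x | (x.2, x.1) ∈ R}

/-- The bisimulation partition refinement sequence: `seqR E ℓ 0` relates nodes
with equal labels, and `seqR E ℓ (k+1)` keeps a pair related by `seqR E ℓ k`
whose outbound neighborhoods match up to `seqR E ℓ k` in both directions. -/
def seqR {V I : Type*} (E : Set (V × V × V)) (ℓ : V → I) :
    ℕ → V → V → Prop
  | 0, n, m => ℓ n = ℓ m
  | k + 1, n, m => seqR E ℓ k n m ∧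
      (∀ p o, (p, o) ∈ outNbr E n → ∃ p' o', (p', o') ∈ outNbr E m ∧
        seqR E ℓ k p p' ∧ seqR E ℓ k o o') ∧
      (∀ p' o', (p', o') ∈ outNbr E m → ∃ p o, (p, o) ∈ outNbr E n ∧
        seqR E ℓ k p p' ∧ seqR E ℓ k o o')

namespace seqR

variable {V I : Type*} {E : Set (V × V × V)} {ℓ : V → I}

theorem le_of_succ (k : ℕ) : seqR E ℓ (k + 1) ≤ seqR E ℓ k :=
  fun _ _ h => h.1

theorem antitone : Antitone (seqR E ℓ) :=
  antitone_nat_of_succ_le le_of_succ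

theorem label_eq {k : ℕ} {n m : V} (h : seqR E ℓ k n m) : ℓ n = ℓ m :=
  antitone (Nat.zero_le k) n m h

theorem exists_succ_eq [Finite V] : ∃ n, seqR E ℓ (n + 1) = seqR E ℓ n := by
  obtain ⟨n, hn⟩ := WellFoundedLT.antitone_chain_condition (antitone (E := E) (ℓ := ℓ))
  exact ⟨n, (hn (n + 1) n.le_succ).symm⟩

theorem isBisimulation_of_succ_eq {n : ℕ} (h : seqR E ℓ (n + 1) = seqR E ℓ n) :
    IsBisimulation E ℓ {p | seqR E ℓ n p.1 p.2} := by
  constructor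
  · intro a b hab
    rw [← h] at hab
    exact ⟨label_eq hab, hab.2.1⟩
  · intro a b (hab : seqR E ℓ n b a)
    rw [← h] at hab
    exact ⟨(label_eq hab).symm, hab.2.2⟩

theorem of_isBisimulation {R : Set (V × V)} (hR : IsBisimulation E ℓ R) {n m : V}
    (hnm : (n, m) ∈ R) (k : ℕ) : seqR E ℓ k n m := by
  induction k generalizing n m with
  | zero => exact (hR.1 n m hnm).1
  | succ k ih =>
    refine ⟨ih hnm, fun p o hpo => ?_, fun p' o' hpo => ?_⟩
    · obtain ⟨p', o', hout, hp, ho⟩ := (hR.1 n m hnm).2 p o hpo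
      exact ⟨p', o', hout, ih hp, ih ho⟩
    · obtain ⟨p, o, hout, hp, ho⟩ := (hR.2 m n hnm).2 p' o' hpo
      exact ⟨p, o, hout, ih hp, ih ho⟩

end seqR

/-- Bisimulation partition refinement captures maximal bisimulation: the
intersection of all stages of the refinement sequence equals the union of all
bisimulations. -/
theorem seqR_iInter_eq_maximal_bisimulation {V I : Type*} [Fintype V]
    (E : Set (V × V × V)) (ℓ : V → I) :
    {p : V × V | ∀ k, seqR E ℓ k p.1 p.2} = ⋃₀ {R | IsBisimulation E ℓ R} := by
  obtain ⟨n, hn⟩ := seqR.exists_succ_eq (E := E) (ℓ := ℓ)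
  ext ⟨a, b⟩
  constructor
  · intro hab
    exact ⟨_, seqR.isBisimulation_of_succ_eq hn, hab n⟩
  · rintro ⟨R, hR, hab⟩ k
    exact seqR.of_isBisimulation hR hab k
end

section
/- Prefix filtering for the overlap measure is sound: let X and Y be finite sets with X nonempty, let θ ∈ [0,1], let k = |X|, and suppose |X ∩ Y| ≥ θ · |X ∪ Y|. Then every subset S ⊆ X with |S| > k·(1 − θ) satisfies S ∩ Y ≠ ∅. -/
/-! A subset of `X` missing `Y` lies in `X \ Y`, which has `|X| - |X ∩ Y| ≤ (1 - θ)|X|` elements,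
since `|X ∩ Y| ≥ θ |X ∪ Y| ≥ θ |X|`. -/

open Finset

section

variable {α : Type*} [DecidableEq α]

theorem Finset.card_add_card_inter_le_of_subset_of_disjoint {S X Y : Finset α}
    (hSX : S ⊆ X) (hSY : Disjoint S Y) : #S + #(X ∩ Y) ≤ #X :=
  calc #S + #(X ∩ Y) ≤ #(X \ Y) + #(X ∩ Y) := by
        gcongr
        exact subset_sdiff.2 ⟨hSX, hSY⟩
    _ = #X := card_sdiff_add_card_inter X Y

theorem Finset.mul_card_le_card_inter_of_mul_card_union_le {X Y : Finset α} {θ : ℝ}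
    (hθ : 0 ≤ θ) (hover : θ * #(X ∪ Y) ≤ #(X ∩ Y)) : θ * #X ≤ #(X ∩ Y) := by
  have hXU : (#X : ℝ) ≤ #(X ∪ Y) := by exact_mod_cast card_le_card subset_union_left
  calc θ * #X ≤ θ * #(X ∪ Y) := by gcongr
    _ ≤ #(X ∩ Y) := hover

end

theorem overlap_prefix_filtering_general {α : Type*} [DecidableEq α]
    (X Y : Finset α)
    (θ : ℝ) (hθ0 : 0 ≤ θ)
    (hover : θ * ((X ∪ Y).card : ℝ) ≤ ((X ∩ Y).card : ℝ)) :
    ∀ S ⊆ X, (X.card : ℝ) * (1 - θ) < (S.card : ℝ) → (S ∩ Y).Nonempty := by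
  intro S hSX hcard
  by_contra hSY
  rw [← not_disjoint_iff_nonempty_inter, not_not] at hSY
  have hS : (#S : ℝ) + #(X ∩ Y) ≤ #X := by
    exact_mod_cast card_add_card_inter_le_of_subset_of_disjoint hSX hSY
  have hinter := mul_card_le_card_inter_of_mul_card_union_le hθ0 hover
  linarith

/-- Prefix filtering for the overlap measure is sound: if `overlap(X, Y) ≥ θ`,
then every subset of `X` of size greater than `|X| * (1 - θ)` intersects `Y`. -/
theorem overlap_prefix_filtering {α : Type*} [DecidableEq α]
    (X Y : Finset α) (hX : X.Nonempty)
    (θ : ℝ) (hθ0 : 0 ≤ θ) (hθ1 : θ ≤ 1)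
    (hover : θ * ((X ∪ Y).card : ℝ) ≤ ((X ∩ Y).card : ℝ)) :
    ∀ S ⊆ X, (X.card : ℝ) * (1 - θ) < (S.card : ℝ) → (S ∩ Y).Nonempty :=
  overlap_prefix_filtering_general X Y θ hθ0 hover
end
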